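/- arXiv:1609.02813 — 2 statements merged into one kernel-verified Lean document; each statement's English description precedes it below -/
import Mathlib

section
/- Let n ≥ 1 be an integer, 0 < R₂ < R₁, p > 2 a real number, and let f⁺ : [R₂,R₁] → ℝ be continuous with f⁺(r) > 0 for all r ∈ [R₂,R₁] and satisfying the normalized balance condition ∫_{R₂}^{R₁} f⁺(r)r^{n−1} dr = Γ(n/2)/(2π^{n/2}). For t ∈ ℝ and ρ ∈ [R₂,R₁] define F(ρ,t) := (t·R₂ⁿ − ∫_{R₂}^ρ f⁺(r)r^{n−1} dr)/ρⁿ, and define M_p(t) := ∫_{R₂}^{R₁} sgn(F(ρ,t))·|F(ρ,t)·ρ|^{1/(p−1)} dρ. Then there exists a unique C_p with M_p(C_p) = 0, and it satisfies 0 < C_p < Γ(n/2)/(2π^{n/2}R₂ⁿ). -/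
/-! With `φ(s) = sgn(s)|s|^{1/(p-1)}` and `G(ρ) = ∫_{R₂}^ρ f⁺(r) r^{n-1} dr`, the integrand of `M_p`
at `ρ` is `φ((t R₂ⁿ - G(ρ)) ρ^{1-n})`. Since `φ` is continuous, sign-preserving and strictly increasing,
and `G` increases from `0` to the balance value `Γ(n/2)/(2π^{n/2})` on `[R₂, R₁]`, the function `M_p`
is continuous and strictly increasing, negative at `0` and positive at `Γ(n/2)/(2π^{n/2}R₂ⁿ)`;
the intermediate value theorem gives its unique zero. -/

open Set MeasureTheory intervalIntegral Function

noncomputable def signedRpow (α s : ℝ) : ℝ := Real.sign s * |s| ^ α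

section signedRpow

variable {α : ℝ}

lemma signedRpow_of_nonneg (hα : 0 < α) {s : ℝ} (hs : 0 ≤ s) : signedRpow α s = s ^ α := by
  rcases hs.eq_or_lt with rfl | hs
  · simp [signedRpow, Real.zero_rpow hα.ne']
  · rw [signedRpow, Real.sign_of_pos hs, abs_of_pos hs, one_mul]

lemma signedRpow_of_nonpos (hα : 0 < α) {s : ℝ} (hs : s ≤ 0) :
    signedRpow α s = -(-s) ^ α := by
  rcases hs.eq_or_lt with rfl | hs
  · simp [signedRpow, Real.zero_rpow hα.ne']
  · rw [signedRpow, Real.sign_of_neg hs, abs_of_neg hs, neg_one_mul]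

lemma signedRpow_pos (hα : 0 < α) {s : ℝ} (hs : 0 < s) : 0 < signedRpow α s := by
  rw [signedRpow_of_nonneg hα hs.le]
  exact Real.rpow_pos_of_pos hs α

lemma signedRpow_neg (hα : 0 < α) {s : ℝ} (hs : s < 0) : signedRpow α s < 0 := by
  rw [signedRpow_of_nonpos hα hs.le, neg_neg_iff_pos]
  exact Real.rpow_pos_of_pos (neg_pos.2 hs) α

lemma strictMono_signedRpow (hα : 0 < α) : StrictMono (signedRpow α) := by
  intro s t hst
  rcases le_or_gt 0 s with hs | hs
  · rw [signedRpow_of_nonneg hα hs, signedRpow_of_nonneg hα (hs.trans hst.le)]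
    exact Real.rpow_lt_rpow hs hst hα
  rcases le_or_gt t 0 with ht | ht
  · rw [signedRpow_of_nonpos hα hs.le, signedRpow_of_nonpos hα ht, neg_lt_neg_iff]
    exact Real.rpow_lt_rpow (neg_nonneg.2 ht) (neg_lt_neg hst) hα
  · exact (signedRpow_neg hα hs).trans (signedRpow_pos hα ht)

lemma signedRpow_eq_sub (hα : 0 < α) (s : ℝ) :
    signedRpow α s = max s 0 ^ α - max (-s) 0 ^ α := by
  rcases le_or_gt 0 s with hs | hs
  · rw [signedRpow_of_nonneg hα hs, max_eq_left hs, max_eq_right (neg_nonpos.2 hs),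
      Real.zero_rpow hα.ne', sub_zero]
  · rw [signedRpow_of_nonpos hα hs.le, max_eq_right hs.le, max_eq_left (neg_nonneg.2 hs.le),
      Real.zero_rpow hα.ne', zero_sub]

lemma continuous_signedRpow (hα : 0 < α) : Continuous (signedRpow α) := by
  rw [funext (signedRpow_eq_sub hα)]
  exact ((Real.continuous_rpow_const hα.le).comp (continuous_id.max continuous_const)).sub
    ((Real.continuous_rpow_const hα.le).comp (continuous_neg.max continuous_const))

lemma sign_mul_abs_mul_rpow {ρ : ℝ} (hρ : 0 < ρ) (s : ℝ) :
    Real.sign s * |s * ρ| ^ α = signedRpow α (s * ρ) := by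
  rcases lt_trichotomy s 0 with hs | rfl | hs
  · rw [signedRpow, Real.sign_of_neg hs, Real.sign_of_neg (mul_neg_of_neg_of_pos hs hρ)]
  · simp [signedRpow]
  · rw [signedRpow, Real.sign_of_pos hs, Real.sign_of_pos (mul_pos hs hρ)]

end signedRpow

section ParametricIntegral

variable {a b : ℝ} {h : ℝ → ℝ → ℝ}

theorem continuous_intervalIntegral_of_continuousOn (hab : a ≤ b)
    (hh : ContinuousOn (uncurry h) (univ ×ˢ Icc a b)) :
    Continuous fun t => ∫ ρ in a..b, h t ρ := by
  have hproj : Continuous (uncurry fun t ρ => h t (projIcc a b hab ρ)) :=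
    hh.comp_continuous (continuous_fst.prodMk (continuous_subtype_val.comp
      ((continuous_projIcc (h := hab)).comp continuous_snd)))
      fun x => ⟨mem_univ _, (projIcc a b hab x.2).2⟩
  refine (continuous_parametric_intervalIntegral_of_continuous' (μ := volume) hproj a b).congr fun t => ?_
  refine integral_congr fun ρ hρ => ?_
  rw [uIcc_of_le hab] at hρ
  simp only [projIcc_of_mem hab hρ]

theorem strictMono_intervalIntegral (hab : a < b)
    (hint : ∀ t, IntervalIntegrable (h t) volume a b)
    (hmono : ∀ ρ ∈ Ioo a b, StrictMono (h · ρ)) :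
    StrictMono fun t => ∫ ρ in a..b, h t ρ := by
  intro t t' htt'
  have hpos : 0 < ∫ ρ in a..b, (h t' ρ - h t ρ) :=
    intervalIntegral_pos_of_pos_on ((hint t').sub (hint t))
      (fun ρ hρ => sub_pos.2 (hmono ρ hρ htt')) hab
  rw [integral_sub (hint t') (hint t)] at hpos
  exact sub_pos.1 hpos

theorem exists_unique_zero_intervalIntegral (hab : a < b)
    (hh : ContinuousOn (uncurry h) (univ ×ˢ Icc a b))
    (hmono : ∀ ρ ∈ Ioo a b, StrictMono (h · ρ)) {t₀ t₁ : ℝ}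
    (ht₀ : ∀ ρ ∈ Ioo a b, h t₀ ρ < 0) (ht₁ : ∀ ρ ∈ Ioo a b, 0 < h t₁ ρ) :
    ∃ C, ((∫ ρ in a..b, h C ρ) = 0 ∧ t₀ < C ∧ C < t₁) ∧
      ∀ C', (∫ ρ in a..b, h C' ρ) = 0 → C' = C := by
  have hint : ∀ t, IntervalIntegrable (h t) volume a b := fun t =>
    ((hh.uncurry_left t (mem_univ t)).intervalIntegrable_of_Icc hab.le)
  have hM := strictMono_intervalIntegral hab hint hmono
  have hM₀ : (∫ ρ in a..b, h t₀ ρ) < 0 := by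
    simpa using intervalIntegral_pos_of_pos_on (hint t₀).neg (fun ρ hρ => neg_pos.2 (ht₀ ρ hρ)) hab
  have hM₁ : 0 < ∫ ρ in a..b, h t₁ ρ := intervalIntegral_pos_of_pos_on (hint t₁) ht₁ hab
  obtain ⟨C, hC, hMC⟩ := intermediate_value_Ioo (hM.lt_iff_lt.1 (hM₀.trans hM₁)).le
    (continuous_intervalIntegral_of_continuousOn hab.le hh).continuousOn (mem_Ioo.2 ⟨hM₀, hM₁⟩)
  exact ⟨C, ⟨hMC, hC⟩, fun C' hC' => hM.injective (hC'.trans hMC.symm)⟩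

end ParametricIntegral

theorem primitive_mem_Ioo_of_pos {a b : ℝ} {g : ℝ → ℝ} (hg : ContinuousOn g (Icc a b))
    (hpos : ∀ r ∈ Icc a b, 0 < g r) {ρ : ℝ} (hρ : ρ ∈ Ioo a b) :
    0 < ∫ r in a..ρ, g r ∧ (∫ r in a..ρ, g r) < ∫ r in a..b, g r := by
  have hint : ∀ {c d}, c ∈ Icc a b → d ∈ Icc a b → IntervalIntegrable g volume c d :=
    fun hc hd => (hg.mono (uIcc_subset_Icc hc hd)).intervalIntegrable
  have ha : a ∈ Icc a b := left_mem_Icc.2 (hρ.1.trans hρ.2).le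
  have hb : b ∈ Icc a b := right_mem_Icc.2 (hρ.1.trans hρ.2).le
  have hρ' : ρ ∈ Icc a b := Ioo_subset_Icc_self hρ
  refine ⟨intervalIntegral_pos_of_pos_on (hint ha hρ')
    (fun r hr => hpos r ⟨hr.1.le, hr.2.le.trans hρ.2.le⟩) hρ.1, ?_⟩
  rw [← integral_add_adjacent_intervals (hint ha hρ') (hint hρ' hb), lt_add_iff_pos_right]
  exact intervalIntegral_pos_of_pos_on (hint hρ' hb)
    (fun r hr => hpos r ⟨hρ.1.le.trans hr.1.le, hr.2.le⟩) hρ.2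

theorem Cp_exists_unique_general (n : ℕ) (R₂ R₁ : ℝ)
    (hR₂ : 0 < R₂) (hR : R₂ < R₁) (p : ℝ) (hp : 2 < p)
    (f : ℝ → ℝ) (hf : ContinuousOn f (Set.Icc R₂ R₁))
    (hfpos : ∀ r ∈ Set.Icc R₂ R₁, 0 < f r)
    (hbal : ∫ r in R₂..R₁, f r * r ^ (n - 1) =
      Real.Gamma ((n : ℝ) / 2) / (2 * Real.pi ^ ((n : ℝ) / 2)))
    (F : ℝ → ℝ → ℝ)
    (hF : ∀ ρ t, F ρ t = (t * R₂ ^ n - ∫ r in R₂..ρ, f r * r ^ (n - 1)) / ρ ^ n)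
    (M : ℝ → ℝ)
    (hM : ∀ t, M t = ∫ ρ in R₂..R₁,
      Real.sign (F ρ t) * |F ρ t * ρ| ^ (1 / (p - 1))) :
    ∃ C : ℝ, (M C = 0 ∧ 0 < C ∧
        C < Real.Gamma ((n : ℝ) / 2) / (2 * Real.pi ^ ((n : ℝ) / 2) * R₂ ^ n)) ∧
      ∀ C' : ℝ, M C' = 0 → C' = C := by
  set A := Real.Gamma ((n : ℝ) / 2) / (2 * Real.pi ^ ((n : ℝ) / 2))
  set G : ℝ → ℝ := fun ρ => ∫ r in R₂..ρ, f r * r ^ (n - 1)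
  set α := 1 / (p - 1)
  have hα : 0 < α := one_div_pos.2 (by linarith)
  have hρpos : ∀ ρ ∈ Icc R₂ R₁, 0 < ρ := fun ρ hρ => hR₂.trans_le hρ.1
  have hg : ContinuousOn (fun r => f r * r ^ (n - 1)) (Icc R₂ R₁) :=
    hf.mul (continuous_pow _).continuousOn
  have hG : ContinuousOn G (Icc R₂ R₁) := by
    simpa only [uIcc_of_le hR.le] using
      continuousOn_primitive_interval' (hg.intervalIntegrable_of_Icc hR.le) left_mem_uIcc
  have hGA : ∀ ρ ∈ Ioo R₂ R₁, 0 < G ρ ∧ G ρ < A := fun ρ hρ => hbal ▸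
    primitive_mem_Ioo_of_pos hg (fun r hr => mul_pos (hfpos r hr) (pow_pos (hρpos r hr) _)) hρ
  have hAdiv : A / R₂ ^ n * R₂ ^ n = A := div_mul_cancel₀ A (pow_pos hR₂ n).ne'
  have hMeq : M = fun t => ∫ ρ in R₂..R₁, signedRpow α ((t * R₂ ^ n - G ρ) / ρ ^ n * ρ) := by
    refine funext fun t => (hM t).trans (integral_congr fun ρ hρ => ?_)
    rw [uIcc_of_le hR.le] at hρ
    simp only [hF, sign_mul_abs_mul_rpow (hρpos ρ hρ), G]
  rw [hMeq, ← div_div]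
  refine exists_unique_zero_intervalIntegral hR ?_ ?_ (t₀ := 0) (t₁ := A / R₂ ^ n) ?_ ?_
  · exact (continuous_signedRpow hα).comp_continuousOn
      ((((continuousOn_fst.mul continuousOn_const).sub (hG.comp continuousOn_snd
        fun x hx => hx.2)).div (continuousOn_snd.pow n)
        fun x hx => (pow_pos (hρpos _ hx.2) n).ne').mul continuousOn_snd)
  · intro ρ hρ
    have hρ₀ := hρpos ρ (Ioo_subset_Icc_self hρ)
    refine (strictMono_signedRpow hα).comp fun t t' htt' => ?_
    gcongr
  · intro ρ hρ
    have hρ₀ := hρpos ρ (Ioo_subset_Icc_self hρ)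
    refine signedRpow_neg hα (mul_neg_of_neg_of_pos (div_neg_of_neg_of_pos ?_ (by positivity)) hρ₀)
    linarith [(hGA ρ hρ).1]
  · intro ρ hρ
    have hρ₀ := hρpos ρ (Ioo_subset_Icc_self hρ)
    refine signedRpow_pos hα (mul_pos (div_pos ?_ (by positivity)) hρ₀)
    linarith [(hGA ρ hρ).2]

/-- Existence and uniqueness of the free constant `C_p` in the annulus case of
Theorem 1.1: under the normalized balance condition
`∫_{R₂}^{R₁} f⁺(r)r^{n-1} dr = Γ(n/2)/(2π^{n/2})`, the map `M_p` has a unique zero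
`C_p`, and `0 < C_p < Γ(n/2)/(2π^{n/2}R₂ⁿ)`. -/
theorem Cp_exists_unique (n : ℕ) (hn : 1 ≤ n) (R₂ R₁ : ℝ)
    (hR₂ : 0 < R₂) (hR : R₂ < R₁) (p : ℝ) (hp : 2 < p)
    (f : ℝ → ℝ) (hf : ContinuousOn f (Set.Icc R₂ R₁))
    (hfpos : ∀ r ∈ Set.Icc R₂ R₁, 0 < f r)
    (hbal : ∫ r in R₂..R₁, f r * r ^ (n - 1) =
      Real.Gamma ((n : ℝ) / 2) / (2 * Real.pi ^ ((n : ℝ) / 2)))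
    (F : ℝ → ℝ → ℝ)
    (hF : ∀ ρ t, F ρ t = (t * R₂ ^ n - ∫ r in R₂..ρ, f r * r ^ (n - 1)) / ρ ^ n)
    (M : ℝ → ℝ)
    (hM : ∀ t, M t = ∫ ρ in R₂..R₁,
      Real.sign (F ρ t) * |F ρ t * ρ| ^ (1 / (p - 1))) :
    ∃ C : ℝ, (M C = 0 ∧ 0 < C ∧
        C < Real.Gamma ((n : ℝ) / 2) / (2 * Real.pi ^ ((n : ℝ) / 2) * R₂ ^ n)) ∧
      ∀ C' : ℝ, M C' = 0 → C' = C :=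
  Cp_exists_unique_general n R₂ R₁ hR₂ hR p hp f hf hfpos hbal F hF M hM
end

section
/- Let n ≥ 1 be an integer, 0 < R₂ < R₁, p > 2 a real number, t ∈ ℝ, and let f⁺ : [R₂,R₁] → ℝ be continuous. Define F(ρ,t) := (t·R₂ⁿ − ∫_{R₂}^ρ f⁺(r)r^{n−1} dr)/ρⁿ for ρ ∈ [R₂,R₁], and define ū(x) := ∫_{R₂}^{|x|} sgn(F(ρ,t))·|F(ρ,t)·ρ|^{1/(p−1)} dρ for x ∈ ℝⁿ with R₂ ≤ |x| ≤ R₁. Then: (i) ū(x) = 0 whenever |x| = R₂; (ii) ū is differentiable at every x with R₂ < |x| < R₁, with |∇ū(x)|^{p−2}∇ū(x) = F(|x|,t)·x; (iii) the vector field x ↦ F(|x|,t)·x is differentiable on the open annulus {R₂ < |x| < R₁} with divergence equal to −f⁺(|x|). Consequently ū is a radially symmetric classical solution of div(|∇u|^{p−2}∇u) + f⁺ = 0 in the open annulus. -/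
/-! The solution is radial, `u x = G ‖x‖` with `G' ρ = ψ (F ρ * ρ)`, where
`ψ a = sgn a * |a| ^ (1 / (p - 1))` inverts `s ↦ |s| ^ (p - 2) * s`. Hence
`∇u x = (G' ‖x‖ / ‖x‖) • x` and `|∇u| ^ (p - 2) • ∇u x = F ‖x‖ • x`. The divergence of a radial
field `φ ‖x‖ • x` is `n φ ρ + ρ φ' ρ = ρ ^ (1 - n) (ρ ^ n φ)'`, and `ρ ^ n F ρ` is
`t R₂ ^ n - ∫ f r r ^ (n - 1)`, whose derivative is `-f ρ ρ ^ (n - 1)`. -/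

open Set

lemma Real.sign_mul_of_pos {a r : ℝ} (hr : 0 < r) : Real.sign (a * r) = Real.sign a := by
  rcases lt_trichotomy a 0 with h | rfl | h
  · rw [Real.sign_of_neg h, Real.sign_of_neg (mul_neg_of_neg_of_pos h hr)]
  · simp
  · rw [Real.sign_of_pos h, Real.sign_of_pos (mul_pos h hr)]

lemma continuous_sign_mul_abs_rpow {α : ℝ} (hα : 0 < α) :
    Continuous fun s : ℝ => Real.sign s * |s| ^ α := by
  have h : Continuous fun s : ℝ => |s| ^ α := continuous_abs.rpow_const fun _ => Or.inr hα.le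
  have hite : (fun s : ℝ => Real.sign s * |s| ^ α) =
      fun s => if 0 ≤ s then |s| ^ α else -|s| ^ α := by
    ext s
    rcases lt_trichotomy s 0 with hs | rfl | hs
    · simp [Real.sign_of_neg hs, hs.not_ge]
    · simp [Real.zero_rpow hα.ne']
    · simp [Real.sign_of_pos hs, hs.le]
  rw [hite]
  exact h.if_le h.neg continuous_const continuous_id fun s hs => by
    simp [← hs, Real.zero_rpow hα.ne']

lemma abs_rpow_sub_two_mul_sign_mul_abs_rpow {p : ℝ} (hp : 1 < p) (a : ℝ) :
    |Real.sign a * |a| ^ (1 / (p - 1))| ^ (p - 2) * (Real.sign a * |a| ^ (1 / (p - 1))) = a := by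
  rcases eq_or_ne a 0 with rfl | ha
  · simp
  have hsign : |Real.sign a| = 1 := by
    rcases Real.sign_apply_eq_of_ne_zero a ha with h | h <;> simp [h]
  have hpos : 0 < |a| := abs_pos.2 ha
  calc |Real.sign a * |a| ^ (1 / (p - 1))| ^ (p - 2) * (Real.sign a * |a| ^ (1 / (p - 1)))
      = Real.sign a * (|a| ^ (1 / (p - 1) * (p - 2)) * |a| ^ (1 / (p - 1))) := by
        rw [abs_mul, hsign, one_mul, abs_of_nonneg (by positivity), ← Real.rpow_mul hpos.le]
        ring
    _ = Real.sign a * |a| := by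
        rw [← Real.rpow_add hpos, show 1 / (p - 1) * (p - 2) + 1 / (p - 1) = 1 by
          field_simp [(sub_pos.2 hp).ne']; ring, Real.rpow_one]
    _ = a := by
        rcases lt_or_gt_of_ne ha with h | h
        · rw [Real.sign_of_neg h, abs_of_neg h]; ring
        · rw [Real.sign_of_pos h, abs_of_pos h]; ring

section Radial

variable {E : Type*} [NormedAddCommGroup E] [InnerProductSpace ℝ E]

lemma hasFDerivAt_norm_of_ne_zero {x : E} (hx : x ≠ 0) :
    HasFDerivAt (‖·‖) (‖x‖⁻¹ • innerSL ℝ x) x := by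
  have h := (hasStrictFDerivAt_norm_sq x).hasFDerivAt.sqrt (by positivity)
  simp only [Real.sqrt_sq (norm_nonneg _)] at h
  convert h using 1
  ext y
  simp only [smul_apply, coe_innerSL_apply, smul_eq_mul, nsmul_eq_mul]
  ring

lemma hasGradientAt_radial [CompleteSpace E] {φ : ℝ → ℝ} {d : ℝ} {x : E} (hx : x ≠ 0)
    (hφ : HasDerivAt φ d ‖x‖) :
    HasGradientAt (fun y => φ ‖y‖) ((d / ‖x‖) • x) x := by
  rw [hasGradientAt_iff_hasFDerivAt]
  refine (hφ.comp_hasFDerivAt x (hasFDerivAt_norm_of_ne_zero hx)).congr_fderiv ?_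
  ext y
  simp only [smul_apply, coe_innerSL_apply, smul_eq_mul,
    InnerProductSpace.toDual_apply_apply, real_inner_smul_left]
  ring

lemma hasFDerivAt_radial_smul {φ : ℝ → ℝ} {d : ℝ} {x : E} (hx : x ≠ 0)
    (hφ : HasDerivAt φ d ‖x‖) :
    HasFDerivAt (fun y => φ ‖y‖ • y)
      (φ ‖x‖ • ContinuousLinearMap.id ℝ E + (d • ‖x‖⁻¹ • innerSL ℝ x).smulRight x) x :=
  (hφ.comp_hasFDerivAt x (hasFDerivAt_norm_of_ne_zero hx)).smul (hasFDerivAt_id x)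

lemma trace_fderiv_radial_smul [FiniteDimensional ℝ E] {φ : ℝ → ℝ} {d : ℝ} {x : E}
    (hx : x ≠ 0) (hφ : HasDerivAt φ d ‖x‖) :
    LinearMap.trace ℝ E (fderiv ℝ (fun y => φ ‖y‖ • y) x).toLinearMap
      = Module.finrank ℝ E * φ ‖x‖ + d * ‖x‖ := by
  rw [(hasFDerivAt_radial_smul hx hφ).fderiv]
  simp only [ContinuousLinearMap.toLinearMap_add, ContinuousLinearMap.toLinearMap_smul,
    ContinuousLinearMap.coe_id, ContinuousLinearMap.coe_smulRight, map_add, map_smul,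
    LinearMap.trace_id, LinearMap.trace_smulRight, smul_eq_mul, LinearMap.smul_apply,
    ContinuousLinearMap.toLinearMap_innerSL_apply, innerₛₗ_apply_apply, real_inner_self_eq_norm_sq]
  field_simp

lemma norm_rpow_sub_two_smul_radial_gradient {p : ℝ} (hp : 1 < p) {x : E} (hx : x ≠ 0) (a : ℝ) :
    ‖((Real.sign a * |a * ‖x‖| ^ (1 / (p - 1))) / ‖x‖) • x‖ ^ (p - 2) •
      ((Real.sign a * |a * ‖x‖| ^ (1 / (p - 1))) / ‖x‖) • x = a • x := by
  have hpos : 0 < ‖x‖ := norm_pos_iff.2 hx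
  rw [← Real.sign_mul_of_pos hpos, norm_smul, Real.norm_eq_abs, abs_div, abs_of_pos hpos,
    div_mul_cancel₀ _ hpos.ne', smul_smul, mul_div_assoc',
    abs_rpow_sub_two_mul_sign_mul_abs_rpow hp, mul_div_cancel_right₀ _ hpos.ne']

end Radial

lemma ContinuousOn.primitive_Icc {g : ℝ → ℝ} {a b : ℝ} (hg : ContinuousOn g (Icc a b)) :
    ContinuousOn (fun s => ∫ r in a..s, g r) (Icc a b) := by
  rcases le_or_gt a b with hab | hab
  · rw [← uIcc_of_le hab] at hg ⊢
    exact intervalIntegral.continuousOn_primitive_interval (hg.integrableOn_compact isCompact_uIcc)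
  · simp [Icc_eq_empty_of_lt hab]

lemma ContinuousOn.hasDerivAt_primitive_Icc {g : ℝ → ℝ} {a b ρ : ℝ}
    (hg : ContinuousOn g (Icc a b)) (hρ : ρ ∈ Ioo a b) :
    HasDerivAt (fun s => ∫ r in a..s, g r) (g ρ) ρ :=
  intervalIntegral.integral_hasDerivAt_right
    ((hg.mono (uIcc_of_le hρ.1.le ▸ Icc_subset_Icc_right hρ.2.le)).intervalIntegrable)
    (ContinuousOn.stronglyMeasurableAtFilter isOpen_Ioo (hg.mono Ioo_subset_Icc_self) ρ hρ)
    (hg.continuousAt (Icc_mem_nhds hρ.1 hρ.2))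

lemma hasDerivAt_div_pow_of_hasDerivAt {N : ℝ → ℝ} {w ρ : ℝ} {n : ℕ} (hn : 1 ≤ n) (hρ : ρ ≠ 0)
    (hN : HasDerivAt N (-(w * ρ ^ (n - 1))) ρ) :
    HasDerivAt (fun s => N s / s ^ n) ((-w - n * (N ρ / ρ ^ n)) / ρ) ρ := by
  refine (hN.div (hasDerivAt_pow n ρ) (pow_ne_zero n hρ)).congr_deriv ?_
  obtain ⟨m, rfl⟩ := Nat.exists_eq_add_of_le' hn
  simp only [Nat.add_sub_cancel]
  field_simp
  ring

theorem pLaplacian_explicit_solution_annulus_general (n : ℕ)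
    (R₂ R₁ : ℝ) (hR₂ : 0 < R₂) (p : ℝ) (hp : 2 < p) (t : ℝ)
    (f : ℝ → ℝ) (hf : ContinuousOn f (Set.Icc R₂ R₁))
    (F : ℝ → ℝ)
    (hF : ∀ ρ, F ρ = (t * R₂ ^ n - ∫ r in R₂..ρ, f r * r ^ (n - 1)) / ρ ^ n)
    (u : EuclideanSpace ℝ (Fin n) → ℝ)
    (hu : ∀ x, u x = ∫ ρ in R₂..‖x‖,
      Real.sign (F ρ) * |F ρ * ρ| ^ (1 / (p - 1))) :
    -- (i) boundary condition on the inner sphere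
    (∀ x : EuclideanSpace ℝ (Fin n), ‖x‖ = R₂ → u x = 0) ∧
    -- (ii) differentiability and flux identity
    (∀ x : EuclideanSpace ℝ (Fin n), R₂ < ‖x‖ → ‖x‖ < R₁ →
      DifferentiableAt ℝ u x ∧
      ‖gradient u x‖ ^ (p - 2) • gradient u x = F ‖x‖ • x) ∧
    -- (iii) the flux field is differentiable with divergence `-f⁺(|x|)`
    (∀ x : EuclideanSpace ℝ (Fin n), R₂ < ‖x‖ → ‖x‖ < R₁ →
      DifferentiableAt ℝ (fun y : EuclideanSpace ℝ (Fin n) => F ‖y‖ • y) x ∧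
      LinearMap.trace ℝ (EuclideanSpace ℝ (Fin n))
        (fderiv ℝ (fun y : EuclideanSpace ℝ (Fin n) => F ‖y‖ • y) x).toLinearMap
        = -(f ‖x‖)) := by
  have hp₁ : 1 < p := by linarith
  have hw : ContinuousOn (fun r => f r * r ^ (n - 1)) (Icc R₂ R₁) :=
    hf.mul (continuous_pow _).continuousOn
  have hFN : F = fun ρ => (t * R₂ ^ n - ∫ r in R₂..ρ, f r * r ^ (n - 1)) / ρ ^ n := funext hF
  have hFc : ContinuousOn F (Icc R₂ R₁) := hFN ▸
    (continuousOn_const.sub hw.primitive_Icc).div (continuous_pow n).continuousOn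
      fun ρ hρ => pow_ne_zero _ (hR₂.trans_le hρ.1).ne'
  have hgc : ContinuousOn (fun ρ => Real.sign (F ρ) * |F ρ * ρ| ^ (1 / (p - 1))) (Icc R₂ R₁) :=
    ((continuous_sign_mul_abs_rpow (one_div_pos.2 (sub_pos.2 hp₁))).comp_continuousOn
      (hFc.mul continuousOn_id)).congr
      fun ρ hρ => by simp [Real.sign_mul_of_pos (hR₂.trans_le hρ.1)]
  refine ⟨fun x hx => by rw [hu, hx, intervalIntegral.integral_same],
    fun x hx₁ hx₂ => ?_, fun x hx₁ hx₂ => ?_⟩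
  · have hx : x ≠ 0 := norm_pos_iff.1 (hR₂.trans hx₁)
    have hgrad := hasGradientAt_radial hx (hgc.hasDerivAt_primitive_Icc ⟨hx₁, hx₂⟩)
    rw [← funext hu] at hgrad
    exact ⟨hgrad.differentiableAt, by
      rw [hgrad.gradient]; exact norm_rpow_sub_two_smul_radial_gradient hp₁ hx _⟩
  · have hx : x ≠ 0 := norm_pos_iff.1 (hR₂.trans hx₁)
    have hn : 1 ≤ n := Nat.one_le_iff_ne_zero.2 (by rintro rfl; exact hx (Subsingleton.elim _ _))
    have hFd := hasDerivAt_div_pow_of_hasDerivAt hn (norm_ne_zero_iff.2 hx)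
      ((hw.hasDerivAt_primitive_Icc ⟨hx₁, hx₂⟩).const_sub (t * R₂ ^ n))
    rw [← hFN] at hFd
    refine ⟨(hasFDerivAt_radial_smul hx hFd).differentiableAt, ?_⟩
    rw [trace_fderiv_radial_smul hx hFd, finrank_euclideanSpace_fin, ← hF]
    field_simp
    ring

/-- Explicit radially symmetric solution of `div(|∇u|^{p-2}∇u) + f⁺ = 0` on the open
annulus `{R₂ < |x| < R₁}` (Theorem 1.1, annulus case `R₁ > R₂`), for an arbitrary
choice of the free constant `t`. -/
theorem pLaplacian_explicit_solution_annulus (n : ℕ) (hn : 1 ≤ n)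
    (R₂ R₁ : ℝ) (hR₂ : 0 < R₂) (hR : R₂ < R₁) (p : ℝ) (hp : 2 < p) (t : ℝ)
    (f : ℝ → ℝ) (hf : ContinuousOn f (Set.Icc R₂ R₁))
    (F : ℝ → ℝ)
    (hF : ∀ ρ, F ρ = (t * R₂ ^ n - ∫ r in R₂..ρ, f r * r ^ (n - 1)) / ρ ^ n)
    (u : EuclideanSpace ℝ (Fin n) → ℝ)
    (hu : ∀ x, u x = ∫ ρ in R₂..‖x‖,
      Real.sign (F ρ) * |F ρ * ρ| ^ (1 / (p - 1))) :
    -- (i) boundary condition on the inner sphere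
    (∀ x : EuclideanSpace ℝ (Fin n), ‖x‖ = R₂ → u x = 0) ∧
    -- (ii) differentiability and flux identity
    (∀ x : EuclideanSpace ℝ (Fin n), R₂ < ‖x‖ → ‖x‖ < R₁ →
      DifferentiableAt ℝ u x ∧
      ‖gradient u x‖ ^ (p - 2) • gradient u x = F ‖x‖ • x) ∧
    -- (iii) the flux field is differentiable with divergence `-f⁺(|x|)`
    (∀ x : EuclideanSpace ℝ (Fin n), R₂ < ‖x‖ → ‖x‖ < R₁ →
      DifferentiableAt ℝ (fun y : EuclideanSpace ℝ (Fin n) => F ‖y‖ • y) x ∧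
      LinearMap.trace ℝ (EuclideanSpace ℝ (Fin n))
        (fderiv ℝ (fun y : EuclideanSpace ℝ (Fin n) => F ‖y‖ • y) x).toLinearMap
        = -(f ‖x‖)) :=
  pLaplacian_explicit_solution_annulus_general n R₂ R₁ hR₂ p hp t f hf F hF u hu
end
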